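/- arXiv:2208.02633 — 8 statements merged into one kernel-verified Lean document; each statement's English description precedes it below -/
import Mathlib

section
/- Let p ∈ ℝ^n with all coordinates strictly positive, b ∈ ℝ^n_{≥0} a bid with budget β > 0, and extend both by p₀ = b₀ = 1 with e₀ = 0. Then the demand set D^b(p) = argmax { ⟨b − p, x⟩ : x ∈ ℝ^n_{≥0}, ⟨p, x⟩ ≤ β } equals the convex hull of the vectors (β/p_i)·e_i over all indices i ∈ {0, …, n} satisfying b_i p_j ≥ b_j p_i for all j ∈ {0, …, n}. -/
open Finset

/-- Budget-feasible nonnegative bundles at prices `p` with budget `β`. -/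
def budgetSet (n : ℕ) (p : Fin n → ℝ) (β : ℝ) : Set (Fin n → ℝ) :=
  {x | (∀ i, 0 ≤ x i) ∧ ∑ i, p i * x i ≤ β}

/-- Demand set: maximizers of `⟨b − p, x⟩` over the budget set. -/
def demandSet (n : ℕ) (b p : Fin n → ℝ) (β : ℝ) : Set (Fin n → ℝ) :=
  {x | x ∈ budgetSet n p β ∧
    ∀ y ∈ budgetSet n p β, ∑ i, (b i - p i) * y i ≤ ∑ i, (b i - p i) * x i}

/-- Extension of a vector by the value `1` at the dummy index `0`. -/
def extOne (n : ℕ) (v : Fin n → ℝ) : Fin (n + 1) → ℝ := Fin.cases 1 v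

/-- `e₀ = 0` and `e_i` the `i`-th standard basis vector for `i ≥ 1`. -/
def unitBundle (n : ℕ) : Fin (n + 1) → (Fin n → ℝ) :=
  Fin.cases 0 (fun j => Pi.single j 1)

lemma extOne_zero {n : ℕ} (v : Fin n → ℝ) : extOne n v 0 = 1 := by simp [extOne]

lemma extOne_succ {n : ℕ} (v : Fin n → ℝ) (i : Fin n) : extOne n v i.succ = v i := by
  simp [extOne]

lemma unitBundle_zero {n : ℕ} : unitBundle n 0 = 0 := by simp [unitBundle]

lemma unitBundle_succ {n : ℕ} (i : Fin n) : unitBundle n i.succ = Pi.single i 1 := by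
  simp [unitBundle]

lemma sum_mul_single {n : ℕ} (c : Fin n → ℝ) (m : Fin n) (t : ℝ) :
    ∑ i, c i * (t • (Pi.single m 1 : Fin n → ℝ)) i = c m * t := by
  rw [Finset.sum_eq_single m]
  · simp only [Pi.smul_apply, Pi.single_eq_same, smul_eq_mul, mul_one]
  · intro i _ him; simp [Pi.single_apply, him]
  · intro h; exact absurd (mem_univ m) h

lemma sum_mul_perturb {n : ℕ} (c x : Fin n → ℝ) (m : Fin n) (t : ℝ) :
    ∑ i, c i * (x + t • (Pi.single m 1 : Fin n → ℝ)) i = (∑ i, c i * x i) + c m * t := by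
  have : ∀ i, c i * (x + t • (Pi.single m 1 : Fin n → ℝ)) i = c i * x i + c i * (t • (Pi.single m 1 : Fin n → ℝ)) i := by
    intro i; simp [mul_add]
  rw [Finset.sum_congr rfl (fun i _ => this i), Finset.sum_add_distrib, sum_mul_single]

lemma demand_convex (n : ℕ) (b p : Fin n → ℝ) (β : ℝ) :
    Convex ℝ (demandSet n b p β) := by
  intro x hx y hy a c ha hc hac
  obtain ⟨⟨hx0, hxS⟩, hxm⟩ := hx
  obtain ⟨⟨hy0, hyS⟩, hym⟩ := hy
  have key : ∀ c' : Fin n → ℝ,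
      ∑ i, c' i * (a • x + c • y) i = a * (∑ i, c' i * x i) + c * (∑ i, c' i * y i) := by
    intro c'
    rw [Finset.mul_sum, Finset.mul_sum, ← Finset.sum_add_distrib]
    refine Finset.sum_congr rfl fun i _ => ?_
    simp only [Pi.add_apply, Pi.smul_apply, smul_eq_mul]
    ring
  refine ⟨⟨fun i => ?_, ?_⟩, ?_⟩
  · have h1 := hx0 i; have h2 := hy0 i
    simp only [Pi.add_apply, Pi.smul_apply, smul_eq_mul]
    positivity
  · rw [key p]
    have hβ' : a * β + c * β = β := by rw [← add_mul, hac, one_mul]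
    linarith [mul_le_mul_of_nonneg_left hxS ha, mul_le_mul_of_nonneg_left hyS hc]
  · intro z hz
    rw [key (fun i => b i - p i)]
    have h1 := hxm z hz
    have h2 := hym z hz
    have hz' : a * (∑ i, (b i - p i) * z i) + c * (∑ i, (b i - p i) * z i)
        = ∑ i, (b i - p i) * z i := by rw [← add_mul, hac, one_mul]
    linarith [mul_le_mul_of_nonneg_left h1 ha, mul_le_mul_of_nonneg_left h2 hc]

lemma gen_mem (n : ℕ) (b p : Fin n → ℝ) (hb : ∀ i, 0 ≤ b i) (hp : ∀ i, 0 < p i)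
    (β : ℝ) (hβ : 0 < β) (i : Fin (n + 1))
    (hcond : ∀ j, extOne n b i * extOne n p j ≥ extOne n b j * extOne n p i) :
    (β / extOne n p i) • unitBundle n i ∈ demandSet n b p β := by
  induction i using Fin.cases with
  | zero =>
    rw [unitBundle_zero, smul_zero]
    refine ⟨⟨fun i => le_refl 0, by simp [hβ.le]⟩, ?_⟩
    rintro y ⟨hy0, hyS⟩
    simp only [Pi.zero_apply, mul_zero, Finset.sum_const_zero]
    refine Finset.sum_nonpos fun m _ => mul_nonpos_of_nonpos_of_nonneg ?_ (hy0 m)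
    have := hcond m.succ
    rw [extOne_zero, extOne_succ, extOne_succ, extOne_zero] at this
    linarith
  | succ k =>
    rw [unitBundle_succ, extOne_succ]
    have hpk := hp k
    have hbk : p k ≤ b k := by
      have := hcond 0
      rw [extOne_zero, extOne_succ, extOne_succ, extOne_zero] at this
      linarith
    have hsum : ∑ m, p m * ((β / p k) • (Pi.single k 1 : Fin n → ℝ)) m = β := by
      rw [sum_mul_single]; field_simp
    refine ⟨⟨fun m => ?_, by rw [hsum]⟩, ?_⟩
    · simp only [Pi.smul_apply, smul_eq_mul, Pi.single_apply]
      split <;> positivity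
    · rintro y ⟨hy0, hyS⟩
      rw [sum_mul_single (fun m => b m - p m) k (β / p k)]
      have hc0 : 0 ≤ (b k - p k) / p k := div_nonneg (by linarith) hpk.le
      have hstep : ∀ m, (b m - p m) * y m ≤ (b k - p k) / p k * (p m * y m) := by
        intro m
        have hcm := hcond m.succ
        rw [extOne_succ, extOne_succ, extOne_succ, extOne_succ] at hcm
        have hcoef : b m - p m ≤ (b k - p k) / p k * p m := by
          rw [div_mul_eq_mul_div, le_div_iff₀ hpk]
          nlinarith
        have := mul_le_mul_of_nonneg_right hcoef (hy0 m)
        nlinarith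
      calc ∑ m, (b m - p m) * y m ≤ ∑ m, (b k - p k) / p k * (p m * y m) :=
            Finset.sum_le_sum fun m _ => hstep m
        _ = (b k - p k) / p k * ∑ m, p m * y m := by rw [Finset.mul_sum]
        _ ≤ (b k - p k) / p k * β := mul_le_mul_of_nonneg_left hyS hc0
        _ = (b k - p k) * (β / p k) := by field_simp

theorem stmt0 (n : ℕ) (hn : 1 ≤ n) (b p : Fin n → ℝ) (hb : ∀ i, 0 ≤ b i)
    (hp : ∀ i, 0 < p i) (β : ℝ) (hβ : 0 < β) :
    demandSet n b p β =
      convexHull ℝ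
        {x | ∃ i : Fin (n + 1),
          (∀ j : Fin (n + 1), extOne n b i * extOne n p j ≥ extOne n b j * extOne n p i) ∧
          x = (β / extOne n p i) • unitBundle n i} := by
  classical
  apply Set.Subset.antisymm
  · intro x hx
    obtain ⟨⟨hx0, hxS⟩, hmax⟩ := hx
    have hβ' : (β : ℝ) ≠ 0 := hβ.ne'
    -- Claim A: positive coordinates have maximal bang-per-buck
    have claimA : ∀ k : Fin n, 0 < x k →
        ∀ j : Fin (n + 1), extOne n b k.succ * extOne n p j ≥ extOne n b j * extOne n p k.succ := by
      intro k hk j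
      rw [extOne_succ, extOne_succ]
      obtain rfl | ⟨m, rfl⟩ := Fin.eq_zero_or_eq_succ j
      · rw [extOne_zero, extOne_zero]
        by_contra h
        push_neg at h
        have hyfeas : x + (-(x k)) • (Pi.single k 1 : Fin n → ℝ) ∈ budgetSet n p β := by
          constructor
          · intro i
            simp only [Pi.add_apply, Pi.smul_apply, smul_eq_mul, Pi.single_apply]
            rcases eq_or_ne i k with rfl | hik
            · simp
            · simp [hik]; exact hx0 i
          · rw [sum_mul_perturb]
            nlinarith [mul_nonneg (hp k).le (hx0 k)]
        have hle := hmax _ hyfeas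
        rw [sum_mul_perturb] at hle
        nlinarith
      · rw [extOne_succ, extOne_succ]
        rcases eq_or_ne m k with rfl | hmk
        · exact le_refl _
        · by_contra h
          push_neg at h
          have hpm := hp m
          have hpk := hp k
          set t := p k * x k / p m with ht
          have ht0 : 0 < t := div_pos (mul_pos hpk hk) hpm
          have hyfeas : x + (-(x k)) • (Pi.single k 1 : Fin n → ℝ)
              + t • (Pi.single m 1 : Fin n → ℝ) ∈ budgetSet n p β := by
            constructor
            · intro i
              simp only [Pi.add_apply, Pi.smul_apply, smul_eq_mul, Pi.single_apply]
              rcases eq_or_ne i k with rfl | hik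
              · simp [Ne.symm hmk]
              · rcases eq_or_ne i m with rfl | him
                · simp [hik]
                  nlinarith [hx0 i]
                · simp [hik, him]; exact hx0 i
            · rw [sum_mul_perturb, sum_mul_perturb]
              have hpt : p m * t = p k * x k := by rw [ht]; field_simp [hpm.ne']
              linarith
          have hle := hmax _ hyfeas
          rw [sum_mul_perturb, sum_mul_perturb] at hle
          have hkey : p m * ((b k - p k) * (-(x k)) + (b m - p m) * t)
              = x k * (b m * p k - b k * p m) := by
            have hpt' : p m * t = p k * x k := by rw [ht]; field_simp [hpm.ne']
            linear_combination (b m - p m) * hpt'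
          have hpos : 0 < x k * (b m * p k - b k * p m) :=
            mul_pos hk (by nlinarith)
          have hE : 0 < (b k - p k) * (-(x k)) + (b m - p m) * t := by nlinarith
          linarith
    -- Claim B: slack budget forces all goods unattractive
    have claimB : (∑ i, p i * x i) < β → ∀ m, b m ≤ p m := by
      intro hS m
      by_contra h
      push_neg at h
      have hpm := hp m
      set t := (β - ∑ i, p i * x i) / p m with ht
      have ht0 : 0 < t := div_pos (by linarith) hpm
      have hyfeas : x + t • (Pi.single m 1 : Fin n → ℝ) ∈ budgetSet n p β := by
        constructor
        · intro i
          simp only [Pi.add_apply, Pi.smul_apply, smul_eq_mul, Pi.single_apply]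
          rcases eq_or_ne i m with rfl | him
          · simp; nlinarith [hx0 i]
          · simp [him]; exact hx0 i
        · rw [sum_mul_perturb]
          have hpt : p m * t = β - ∑ i, p i * x i := by rw [ht]; field_simp [hpm.ne']
          linarith
      have hle := hmax _ hyfeas
      rw [sum_mul_perturb] at hle
      nlinarith [mul_pos (sub_pos.2 h) ht0]
    -- weights for the convex combination
    set w : Fin (n + 1) → ℝ :=
      Fin.cases (1 - (∑ i, p i * x i) / β) (fun k => p k * x k / β) with hwdef
    set z : Fin (n + 1) → (Fin n → ℝ) :=
      fun i => (β / extOne n p i) • unitBundle n i with hzdef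
    set T : Finset (Fin (n + 1)) := Finset.univ.filter
      (fun i => ∀ j, extOne n b i * extOne n p j ≥ extOne n b j * extOne n p i) with hTdef
    have hw0 : w 0 = 1 - (∑ i, p i * x i) / β := by simp [hwdef]
    have hws : ∀ k : Fin n, w k.succ = p k * x k / β := fun k => by simp [hwdef]
    have hwT : ∀ i, i ∉ T → w i = 0 := by
      intro i hi
      by_contra hwne
      apply hi
      rw [hTdef, Finset.mem_filter]
      refine ⟨Finset.mem_univ i, ?_⟩
      obtain rfl | ⟨k, rfl⟩ := Fin.eq_zero_or_eq_succ i
      · have h1 : (∑ i, p i * x i) / β ≤ 1 := by rw [div_le_one hβ]; exact hxS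
        have h2 : (∑ i, p i * x i) / β ≠ 1 := by
          intro hh; exact hwne (by rw [hw0, hh]; ring)
        have hS : (∑ i, p i * x i) < β := by
          rw [← div_lt_one hβ]; exact lt_of_le_of_ne h1 h2
        intro j
        obtain rfl | ⟨m, rfl⟩ := Fin.eq_zero_or_eq_succ j
        · exact le_refl _
        · rw [extOne_zero, extOne_succ, extOne_zero, extOne_succ]
          have := claimB hS m
          linarith
      · have hxk : 0 < x k := by
          rcases lt_or_eq_of_le (hx0 k) with h' | h'
          · exact h'
          · exact absurd (by rw [hws, ← h', mul_zero, zero_div]) hwne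
        exact claimA k hxk
    have hw1 : ∑ i ∈ T, w i = 1 := by
      have htot : ∑ i, w i = 1 := by
        rw [Fin.sum_univ_succ, hw0]
        simp only [hws]
        rw [← Finset.sum_div]
        field_simp
        ring
      exact (Finset.sum_subset (Finset.subset_univ T) (fun i _ hi => hwT i hi)).trans htot
    have hxdecomp : ∑ i ∈ T, w i • z i = x := by
      have huniv : ∑ i, w i • z i = x := by
        rw [Fin.sum_univ_succ]
        have hz0 : z 0 = 0 := by rw [hzdef]; simp [unitBundle_zero]
        rw [hz0, smul_zero, zero_add]
        have hterm : ∀ k : Fin n, w k.succ • z k.succ = (Pi.single k (x k) : Fin n → ℝ) := by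
          intro k
          rw [hws, hzdef]
          simp only [extOne_succ, unitBundle_succ]
          rw [smul_smul]
          have hc : p k * x k / β * (β / p k) = x k := by
            field_simp [(hp k).ne']
          rw [hc]
          funext j
          simp only [Pi.smul_apply, smul_eq_mul, Pi.single_apply]
          split <;> simp
        rw [Finset.sum_congr rfl (fun k _ => hterm k)]
        exact Finset.univ_sum_single x
      exact (Finset.sum_subset (Finset.subset_univ T)
        (fun i _ hi => by rw [hwT i hi, zero_smul])).trans huniv
    rw [← hxdecomp]
    refine (convex_convexHull ℝ _).sum_mem (fun i hi => ?_) hw1 (fun i hi => ?_)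
    · obtain rfl | ⟨k, rfl⟩ := Fin.eq_zero_or_eq_succ i
      · rw [hw0]
        have : (∑ i, p i * x i) / β ≤ 1 := by rw [div_le_one hβ]; exact hxS
        linarith
      · rw [hws]
        exact div_nonneg (mul_nonneg (hp k).le (hx0 k)) hβ.le
    · exact subset_convexHull ℝ _ ⟨i, (Finset.mem_filter.1 (hTdef ▸ hi)).2, by rw [hzdef]⟩
  · exact convexHull_min
      (by rintro y ⟨i, hcond, rfl⟩; exact gen_mem n b p hb hp β hβ i hcond)
      (demand_convex n b p β)
end

section
/- For a bid b (with b₀ = 1, β > 0) and a positive price vector p (with p₀ = 1), the singleton bundle (β/p_i)·e_i lies in the demand set D^b(p) if and only if b_i/p_i ≥ b_j/p_j for all j ∈ {0,…,n}; equivalently, good i is demanded iff b_i p_j ≥ b_j p_i for all j. -/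
open Finset

lemma sum_mul_smul_single (n : ℕ) (f : Fin n → ℝ) (k : Fin n) (c : ℝ) :
    ∑ j, f j * (c • (Pi.single k 1 : Fin n → ℝ)) j = f k * c := by
  have h : ∀ j, f j * (c • (Pi.single k 1 : Fin n → ℝ)) j = if j = k then f k * c else 0 := by
    intro j
    by_cases hj : j = k <;> simp [hj, Pi.single_apply, mul_comm]
  rw [Finset.sum_congr rfl (fun j _ => h j), Finset.sum_ite_eq']
  simp

lemma cand_mem (n : ℕ) (b p : Fin n → ℝ) (hp : ∀ i, 0 < p i) (β : ℝ) (hβ : 0 < β)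
    (i : Fin (n + 1)) : (β / extOne n p i) • unitBundle n i ∈ budgetSet n p β := by
  induction i using Fin.cases with
  | zero =>
      constructor
      · intro j; simp [unitBundle]
      · simp [unitBundle]; positivity
  | succ k =>
      constructor
      · intro j
        have : 0 ≤ β / p k := le_of_lt (div_pos hβ (hp k))
        simp only [extOne, unitBundle, Fin.cases_succ, Pi.smul_apply, smul_eq_mul,
          Pi.single_apply]
        by_cases hj : j = k <;> simp [hj, this]
      · have := sum_mul_smul_single n p k (β / p k)
        simp only [extOne, unitBundle, Fin.cases_succ]
        rw [this, mul_div_cancel₀ _ (ne_of_gt (hp k))]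

lemma cand_util (n : ℕ) (b p : Fin n → ℝ) (hp : ∀ i, 0 < p i) (β : ℝ)
    (i : Fin (n + 1)) :
    ∑ j, (b j - p j) * ((β / extOne n p i) • unitBundle n i) j =
      (extOne n b i / extOne n p i - 1) * β := by
  induction i using Fin.cases with
  | zero => simp [unitBundle, extOne]
  | succ k =>
      have := sum_mul_smul_single n (fun j => b j - p j) k (β / p k)
      simp only [extOne, unitBundle, Fin.cases_succ]
      rw [this]
      have hk : p k ≠ 0 := (hp k).ne'
      field_simp

lemma util_le (n : ℕ) (b p : Fin n → ℝ) (hp : ∀ i, 0 < p i) (β : ℝ)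
    (c : ℝ) (hc : 1 ≤ c) (hc' : ∀ k : Fin n, b k / p k ≤ c)
    (y : Fin n → ℝ) (hy : y ∈ budgetSet n p β) :
    ∑ j, (b j - p j) * y j ≤ (c - 1) * β := by
  obtain ⟨hy1, hy2⟩ := hy
  calc ∑ j, (b j - p j) * y j ≤ ∑ j, (c - 1) * (p j * y j) := by
        apply Finset.sum_le_sum
        intro j _
        have hpy : 0 ≤ p j * y j := mul_nonneg (le_of_lt (hp j)) (hy1 j)
        have h1 : (b j - p j) * y j = (b j / p j - 1) * (p j * y j) := by
          have hpj : p j ≠ 0 := (hp j).ne'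
          field_simp
        rw [h1]
        exact mul_le_mul_of_nonneg_right (by linarith [hc' j]) hpy
    _ = (c - 1) * ∑ j, p j * y j := by rw [Finset.mul_sum]
    _ ≤ (c - 1) * β := mul_le_mul_of_nonneg_left hy2 (by linarith)

lemma main_iff (n : ℕ) (b p : Fin n → ℝ) (hp : ∀ i, 0 < p i) (β : ℝ) (hβ : 0 < β)
    (i : Fin (n + 1)) :
    (β / extOne n p i) • unitBundle n i ∈ demandSet n b p β ↔
      ∀ j : Fin (n + 1), extOne n b j / extOne n p j ≤ extOne n b i / extOne n p i := by
  constructor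
  · rintro ⟨-, hopt⟩ j
    have hj := hopt _ (cand_mem n b p hp β hβ j)
    rw [cand_util n b p hp β j, cand_util n b p hp β i] at hj
    have := (mul_le_mul_iff_of_pos_right hβ).mp hj
    linarith
  · intro h
    refine ⟨cand_mem n b p hp β hβ i, ?_⟩
    intro y hy
    rw [cand_util n b p hp β i]
    apply util_le n b p hp β _ _ _ y hy
    · have := h 0
      simpa [extOne] using this
    · intro k
      have := h k.succ
      simpa [extOne] using this

/-- Good `i` (including the dummy good `0`) is demanded at `p` iff
`b_i/p_i ≥ b_j/p_j` for all `j`, equivalently `b_i p_j ≥ b_j p_i` for all `j`. -/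
theorem stmt1 (n : ℕ) (hn : 1 ≤ n) (b p : Fin n → ℝ) (hb : ∀ i, 0 ≤ b i)
    (hp : ∀ i, 0 < p i) (β : ℝ) (hβ : 0 < β) (i : Fin (n + 1)) :
    ((β / extOne n p i) • unitBundle n i ∈ demandSet n b p β ↔
      ∀ j : Fin (n + 1), extOne n b j / extOne n p j ≤ extOne n b i / extOne n p i) ∧
    ((β / extOne n p i) • unitBundle n i ∈ demandSet n b p β ↔
      ∀ j : Fin (n + 1), extOne n b i * extOne n p j ≥ extOne n b j * extOne n p i) := by
  have hppos : ∀ j : Fin (n + 1), 0 < extOne n p j := by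
    intro j
    induction j using Fin.cases with
    | zero => simp [extOne]
    | succ k => simpa [extOne] using hp k
  refine ⟨main_iff n b p hp β hβ i, (main_iff n b p hp β hβ i).trans ?_⟩
  constructor <;> intro h j <;> have := h j
  · exact (div_le_div_iff₀ (hppos j) (hppos i)).mp this
  · exact (div_le_div_iff₀ (hppos j) (hppos i)).mpr this
end

section
/- Let (b^1, I^1), …, (b^n, I^n) be n indifference hyperplanes whose defining linear equations b_i p_j = b_j p_i (with i, j ∈ I^l, and p₀ interpreted as the constant 1) are linearly independent, and suppose they have a common point p ∈ ℝ^n_{>0}. Let 𝓘 ⊂ {0,…,n} with 0 ∈ 𝓘 and |𝓘| < n + 1. Then there exists some l ∈ {1,…,n} with |I^l ∩ 𝓘| = 1. -/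
open Finset

/-- Lemma on the structure of linearly independent indifference hyperplanes:
given `n` linearly independent indifference hyperplanes `(b^l, {I l, J l})`
with a common point `p ∈ ℝ^n_{>0}` (with `p₀ = 1`, `b^l₀ = 1`), and a proper
subset `𝓘` of `{0,…,n}` containing `0`, some pair `{I l, J l}` meets `𝓘` in
exactly one index. -/
theorem stmt2 (n : ℕ) (hn : 1 ≤ n)
    (b : Fin n → Fin (n + 1) → ℝ) (hb0 : ∀ l, b l 0 = 1) (hbnn : ∀ l i, 0 ≤ b l i)
    (I J : Fin n → Fin (n + 1)) (hIJ : ∀ l, I l ≠ J l)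
    -- linear independence of the defining equations `b_i p_j = b_j p_i`,
    -- as linear functionals in the variables `p₁,…,p_n` (`p₀` being constant)
    (hli : LinearIndependent ℝ (fun l : Fin n => fun k : Fin n =>
      b l (I l) * (if k.succ = J l then (1 : ℝ) else 0)
        - b l (J l) * (if k.succ = I l then (1 : ℝ) else 0)))
    (p : Fin (n + 1) → ℝ) (hp0 : p 0 = 1) (hppos : ∀ i, 0 < p i)
    -- `p` lies in each indifference hyperplane `H(b^l, {I l, J l})`
    (hmem : ∀ l, b l (I l) * p (J l) = b l (J l) * p (I l) ∧
      ∀ k, b l (I l) * p k ≥ b l k * p (I l))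
    (𝓘 : Finset (Fin (n + 1))) (h0 : (0 : Fin (n + 1)) ∈ 𝓘) (hcard : 𝓘.card < n + 1) :
    ∃ l : Fin n, (({I l, J l} : Finset (Fin (n + 1))) ∩ 𝓘).card = 1 := by
  by_contra hcon
  push_neg at hcon
  -- each pair is entirely inside or entirely outside 𝓘
  have hiff : ∀ l, (I l ∈ 𝓘 ↔ J l ∈ 𝓘) := by
    intro l
    constructor
    · intro hI
      by_contra hJ
      apply hcon l
      have : ({I l, J l} : Finset (Fin (n + 1))) ∩ 𝓘 = {I l} := by
        ext x
        simp only [Finset.mem_inter, Finset.mem_insert, Finset.mem_singleton]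
        constructor
        · rintro ⟨hx | hx, hx𝓘⟩
          · exact hx
          · exact absurd (hx ▸ hx𝓘) hJ
        · rintro rfl; exact ⟨Or.inl rfl, hI⟩
      rw [this, Finset.card_singleton]
    · intro hJ
      by_contra hI
      apply hcon l
      have : ({I l, J l} : Finset (Fin (n + 1))) ∩ 𝓘 = {J l} := by
        ext x
        simp only [Finset.mem_inter, Finset.mem_insert, Finset.mem_singleton]
        constructor
        · rintro ⟨hx | hx, hx𝓘⟩
          · exact absurd (hx ▸ hx𝓘) hI
          · exact hx
        · rintro rfl; exact ⟨Or.inr rfl, hJ⟩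
      rw [this, Finset.card_singleton]
  -- the witness vector
  set W : Fin (n + 1) → ℝ := fun i => if i ∈ 𝓘 then 0 else p i with hW
  have hW0 : W 0 = 0 := by simp [hW, h0]
  set w : Fin n → ℝ := fun k => W k.succ with hwdef
  -- the matrix of the system
  set M : Matrix (Fin n) (Fin n) ℝ := fun l k =>
    b l (I l) * (if k.succ = J l then (1 : ℝ) else 0)
      - b l (J l) * (if k.succ = I l then (1 : ℝ) else 0) with hM
  have hMunit : IsUnit M := Matrix.linearIndependent_rows_iff_isUnit.mp hli
  -- auxiliary sum computation
  have hsum : ∀ j : Fin (n + 1),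
      (∑ k : Fin n, (if k.succ = j then (1 : ℝ) else 0) * w k) = W j := by
    intro j
    rcases Fin.eq_zero_or_eq_succ j with rfl | ⟨k₀, rfl⟩
    · rw [hW0]
      apply Finset.sum_eq_zero
      intro k _
      rw [if_neg (Fin.succ_ne_zero k), zero_mul]
    · rw [Finset.sum_eq_single k₀]
      · simp [hwdef]
      · intro k _ hk
        rw [if_neg (fun h => hk (Fin.succ_injective n h)), zero_mul]
      · intro h; exact absurd (Finset.mem_univ k₀) h
  -- M *ᵥ w = 0
  have hMw : M.mulVec w = 0 := by
    funext l
    show ∑ k, M l k * w k = 0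
    have : ∑ k, M l k * w k
        = b l (I l) * (∑ k, (if k.succ = J l then (1 : ℝ) else 0) * w k)
          - b l (J l) * (∑ k, (if k.succ = I l then (1 : ℝ) else 0) * w k) := by
      rw [Finset.mul_sum, Finset.mul_sum, ← Finset.sum_sub_distrib]
      apply Finset.sum_congr rfl
      intro k _
      simp only [hM, mul_ite, mul_zero, mul_one, ite_mul, zero_mul, sub_mul]
      ring_nf
    rw [this, hsum, hsum]
    by_cases hI : I l ∈ 𝓘
    · have hJ : J l ∈ 𝓘 := (hiff l).mp hI
      simp [hW, hI, hJ]
    · have hJ : J l ∉ 𝓘 := fun h => hI ((hiff l).mpr h)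
      simp only [hW, if_neg hI, if_neg hJ]
      rw [(hmem l).1]; ring
  have hw0 : w = 0 := by
    have hinj := Matrix.mulVec_injective_iff_isUnit.mpr hMunit
    have : M.mulVec w = M.mulVec 0 := by rw [hMw, Matrix.mulVec_zero]
    exact hinj this
  -- but 𝓘 is proper: some nonzero index is missing
  have : ∃ i : Fin (n + 1), i ∉ 𝓘 := by
    by_contra hall
    push_neg at hall
    have : 𝓘 = Finset.univ := Finset.eq_univ_iff_forall.mpr hall
    rw [this, Finset.card_univ, Fintype.card_fin] at hcard
    exact lt_irrefl _ hcard
  obtain ⟨i, hi⟩ := this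
  have hine : i ≠ 0 := fun h => hi (h ▸ h0)
  obtain ⟨k₀, rfl⟩ := Fin.eq_succ_of_ne_zero hine
  have : w k₀ = 0 := by rw [hw0]; rfl
  rw [hwdef] at this
  simp only [hW, if_neg hi] at this
  exact (hppos k₀.succ).ne' this
end

section
/- For every price vector p̄ ∈ ℝ^n_{>0}, there exists a price vector p ∈ ℝ^n_{>0} such that every good i ∈ {1,…,n} is demanded by at least one bidder at p (i.e. ⋃_{b ∈ 𝓑} G^b(p) ⊇ {1,…,n}) and r(p) ≥ r(p̄). -/
open Finset

noncomputable section

/-- The goods (including the dummy good `0`) demanded by bid `b` at prices `p`. -/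
def demandedGoods (n : ℕ) (b p : Fin n → ℝ) : Set (Fin (n + 1)) :=
  {i | ∀ j, extOne n b i * extOne n p j ≥ extOne n b j * extOne n p i}

/-- The auctioneer's optimal revenue `r(p)` at prices `p`: the supremum of
`Σ_b ⟨p, x^b⟩ − ψ(Σ_b x^b)` over envy-free allocations `x^b ∈ D^b(p)`. -/
def revenue (n : ℕ) (B : Finset (Fin n → ℝ)) (β : (Fin n → ℝ) → ℝ)
    (ψ : (Fin n → ℝ) → EReal) (p : Fin n → ℝ) : EReal :=
  sSup {v : EReal | ∃ x : (Fin n → ℝ) → (Fin n → ℝ),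
    (∀ b ∈ B, x b ∈ demandSet n b p (β b)) ∧
    v = ((∑ b ∈ B, ∑ i, p i * x b i : ℝ) : EReal) - ψ (∑ b ∈ B, x b)}

/-- For every price `p̄ > 0` there is a price `p > 0` at which every good is
demanded by some bidder and which yields at least as much revenue. -/
theorem stmt5 (n : ℕ) (hn : 1 ≤ n) (B : Finset (Fin n → ℝ)) (hBne : B.Nonempty)
    (hbnn : ∀ b ∈ B, ∀ i, 0 ≤ b i)
    (β : (Fin n → ℝ) → ℝ) (hβ : ∀ b ∈ B, 0 < β b)
    (hgood : ∀ i : Fin n, ∃ b ∈ B, 0 < b i)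
    (ψ : (Fin n → ℝ) → EReal) (hψ0 : ψ 0 = 0)
    (hψmono : ∀ x y : Fin n → ℝ, (∀ i, 0 ≤ x i) → (∀ i, x i ≤ y i) → ψ x ≤ ψ y)
    (hψconv : ∀ x y : Fin n → ℝ, (∀ i, 0 ≤ x i) → (∀ i, 0 ≤ y i) →
      ∀ t : ℝ, 0 ≤ t → t ≤ 1 →
      ψ (t • x + (1 - t) • y) ≤ (t : EReal) * ψ x + ((1 - t : ℝ) : EReal) * ψ y)
    (hψlsc : LowerSemicontinuousOn ψ {x | ∀ i, 0 ≤ x i})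
    (pbar : Fin n → ℝ) (hpbar : ∀ i, 0 < pbar i) :
    ∃ p : Fin n → ℝ, (∀ i, 0 < p i) ∧
      (∀ i : Fin n, ∃ b ∈ B, i.succ ∈ demandedGoods n b p) ∧
      revenue n B β ψ pbar ≤ revenue n B β ψ p := by
  have hFne : (Finset.univ : Finset (Fin n)).Nonempty := ⟨⟨0, hn⟩, mem_univ _⟩
  -- the maximal "bang per buck" of bid b at prices pbar (at least 1, via the dummy good)
  set M : (Fin n → ℝ) → ℝ := fun b => max 1 (Finset.univ.sup' hFne (fun j => b j / pbar j))
    with hMdef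
  have hM1 : ∀ b, 1 ≤ M b := fun b => le_max_left _ _
  have hMpos : ∀ b, 0 < M b := fun b => lt_of_lt_of_le one_pos (hM1 b)
  have hMub : ∀ b j, b j ≤ M b * pbar j := by
    intro b j
    have h1 : b j / pbar j ≤ M b :=
      le_trans (Finset.le_sup' (fun j => b j / pbar j) (mem_univ j)) (le_max_right _ _)
    rwa [div_le_iff₀ (hpbar j), mul_comm (M b) (pbar j)] at *
  have hMatt : ∀ b, M b = 1 ∨ ∃ j, b j = M b * pbar j := by
    intro b
    obtain ⟨j, -, hj⟩ := Finset.exists_mem_eq_sup' hFne (fun j => b j / pbar j)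
    rcases le_or_gt (Finset.univ.sup' hFne (fun j => b j / pbar j)) 1 with h | h
    · exact Or.inl (max_eq_left h)
    · right
      refine ⟨j, ?_⟩
      have hMe : M b = b j / pbar j := by
        rw [hMdef]; simp only []; rw [max_eq_right h.le, hj]
      rw [hMe, div_mul_cancel₀ _ (ne_of_gt (hpbar j))]
  -- the new prices
  set p : Fin n → ℝ := fun i => B.sup' hBne (fun b => b i / M b) with hpdef
  have hpleB : ∀ b ∈ B, ∀ i, b i ≤ M b * p i := by
    intro b hb i
    have h1 : b i / M b ≤ p i := Finset.le_sup' (fun b => b i / M b) hb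
    rwa [div_le_iff₀ (hMpos b), mul_comm (p i) (M b)] at h1
  have hple : ∀ i, p i ≤ pbar i := by
    intro i
    apply Finset.sup'_le
    intro b hb
    rw [div_le_iff₀ (hMpos b), mul_comm (pbar i) (M b)]
    exact hMub b i
  have hppos : ∀ i, 0 < p i := by
    intro i
    obtain ⟨b, hbB, hbi⟩ := hgood i
    exact lt_of_lt_of_le (div_pos hbi (hMpos b)) (Finset.le_sup' (fun b => b i / M b) hbB)
  have hpatt : ∀ i, ∃ b ∈ B, b i = M b * p i := by
    intro i
    obtain ⟨b, hbB, hb⟩ := Finset.exists_mem_eq_sup' hBne (fun b => b i / M b)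
    refine ⟨b, hbB, ?_⟩
    have hthis : p i = b i / M b := hb
    rw [hthis, mul_div_cancel₀ _ (ne_of_gt (hMpos b))]
  -- key demand-set transfer lemma
  have hDsub : ∀ b ∈ B, ∀ x ∈ demandSet n b pbar (β b),
      (∑ i, p i * x i = ∑ i, pbar i * x i) ∧ x ∈ demandSet n b p (β b) := by
    intro b hbB x hx
    obtain ⟨⟨hxnn, hxbud⟩, hxopt⟩ := hx
    -- general upper bound on utility at any prices q with b ≤ M b • q
    have hup : ∀ (q : Fin n → ℝ), (∀ i, b i ≤ M b * q i) →
        ∀ y : Fin n → ℝ, (∀ i, 0 ≤ y i) → (∑ i, q i * y i ≤ β b) →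
        ∑ i, (b i - q i) * y i ≤ β b * (M b - 1) := by
      intro q hq y hynn hybud
      have h1 : ∑ i, (b i - q i) * y i ≤ ∑ i, (M b - 1) * (q i * y i) := by
        apply Finset.sum_le_sum
        intro i _
        nlinarith [mul_nonneg (sub_nonneg.mpr (hq i)) (hynn i)]
      have h2 : ∑ i, (M b - 1) * (q i * y i) = (M b - 1) * ∑ i, q i * y i := by
        rw [Finset.mul_sum]
      have h3 : (M b - 1) * ∑ i, q i * y i ≤ (M b - 1) * β b :=
        mul_le_mul_of_nonneg_left hybud (by linarith [hM1 b])
      calc ∑ i, (b i - q i) * y i ≤ (M b - 1) * ∑ i, q i * y i := by rw [← h2]; exact h1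
        _ ≤ (M b - 1) * β b := h3
        _ = β b * (M b - 1) := mul_comm _ _
    -- the optimal value at pbar is β b * (M b - 1)
    have hlow : β b * (M b - 1) ≤ ∑ i, (b i - pbar i) * x i := by
      rcases hMatt b with hM | ⟨j, hj⟩
      · rw [hM]
        simp only [sub_self, mul_zero]
        have h0 : (0 : Fin n → ℝ) ∈ budgetSet n pbar (β b) := by
          refine ⟨fun i => le_refl 0, ?_⟩
          simp [le_of_lt (hβ b hbB)]
        have := hxopt 0 h0
        simpa using this
      · set y : Fin n → ℝ := fun k => if k = j then β b / pbar j else 0 with hydef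
        have hybud : y ∈ budgetSet n pbar (β b) := by
          constructor
          · intro i
            rw [hydef]
            dsimp only
            split
            · exact div_nonneg (le_of_lt (hβ b hbB)) (le_of_lt (hpbar j))
            · exact le_refl 0
          · rw [hydef]
            simp only [mul_ite, mul_zero, Finset.sum_ite_eq']
            simp only [mem_univ, if_true]
            rw [mul_div_cancel₀ _ (ne_of_gt (hpbar j))]
        have hyval : ∑ i, (b i - pbar i) * y i = β b * (M b - 1) := by
          rw [hydef]
          simp only [mul_ite, mul_zero, Finset.sum_ite_eq']
          simp only [mem_univ, if_true]
          rw [hj]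
          have hne : pbar j ≠ 0 := ne_of_gt (hpbar j)
          field_simp
        have := hxopt y hybud
        rw [hyval] at this
        exact this
    have hV : ∑ i, (b i - pbar i) * x i = β b * (M b - 1) :=
      le_antisymm (hup pbar (hMub b) x hxnn hxbud) hlow
    -- any good bought by x has maximal ratio, hence its price is unchanged
    have hpeq : ∀ i, x i ≠ 0 → p i = pbar i := by
      intro i hxi
      -- first: b i = M b * pbar i
      have hsums : ∑ i, (b i - pbar i) * x i = ∑ i, (M b - 1) * (pbar i * x i) := by
        have hle : ∀ i ∈ Finset.univ, (b i - pbar i) * x i ≤ (M b - 1) * (pbar i * x i) := by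
          intro i _
          nlinarith [mul_nonneg (sub_nonneg.mpr (hMub b i)) (hxnn i)]
        have h2 : ∑ i, (M b - 1) * (pbar i * x i) ≤ β b * (M b - 1) := by
          rw [← Finset.mul_sum]
          calc (M b - 1) * ∑ i, pbar i * x i ≤ (M b - 1) * β b :=
                mul_le_mul_of_nonneg_left hxbud (by linarith [hM1 b])
            _ = β b * (M b - 1) := mul_comm _ _
        have h1 : ∑ i, (b i - pbar i) * x i ≤ ∑ i, (M b - 1) * (pbar i * x i) :=
          Finset.sum_le_sum hle
        linarith [hV]
      have heach := (Finset.sum_eq_sum_iff_of_le (fun i _ =>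
        by nlinarith [mul_nonneg (sub_nonneg.mpr (hMub b i)) (hxnn i)] :
          ∀ i ∈ Finset.univ, (b i - pbar i) * x i ≤ (M b - 1) * (pbar i * x i))).mp hsums
      have hi := heach i (mem_univ i)
      have hbi : b i = M b * pbar i := by
        have hz : (b i - M b * pbar i) * x i = 0 := by linear_combination hi
        rcases mul_eq_zero.mp hz with h | h
        · linarith
        · exact absurd h hxi
      have h1 : pbar i ≤ p i := by
        have h2 : b i / M b ≤ p i := Finset.le_sup' (fun b => b i / M b) hbB
        rw [hbi, mul_comm, mul_div_assoc, div_self (ne_of_gt (hMpos b)), mul_one] at h2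
        exact h2
      exact le_antisymm (hple i) h1
    have hsum : ∑ i, p i * x i = ∑ i, pbar i * x i := by
      apply Finset.sum_congr rfl
      intro i _
      by_cases h : x i = 0
      · rw [h, mul_zero, mul_zero]
      · rw [hpeq i h]
    refine ⟨hsum, ⟨⟨hxnn, by rw [hsum]; exact hxbud⟩, ?_⟩⟩
    intro y hy
    obtain ⟨hynn, hybud⟩ := hy
    have hxval : ∑ i, (b i - p i) * x i = β b * (M b - 1) := by
      rw [← hV]
      apply Finset.sum_congr rfl
      intro i _
      by_cases h : x i = 0
      · rw [h, mul_zero, mul_zero]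
      · rw [hpeq i h]
    rw [hxval]
    exact hup p (hpleB b hbB) y hynn hybud
  refine ⟨p, hppos, ?_, ?_⟩
  · -- every good is demanded
    intro i
    obtain ⟨b, hbB, hbi⟩ := hpatt i
    refine ⟨b, hbB, ?_⟩
    intro j
    refine Fin.cases ?_ ?_ j
    · show b i * extOne n p 0 ≥ extOne n p 0 * p i
      simp only [extOne, Fin.cases_zero]
      have : (1:ℝ) * p i ≤ M b * p i :=
        mul_le_mul_of_nonneg_right (hM1 b) (le_of_lt (hppos i))
      rw [hbi]
      nlinarith [hppos i, hM1 b]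
    · intro k
      show b i * extOne n p k.succ ≥ extOne n b k.succ * p i
      simp only [extOne, Fin.cases_succ]
      have h1 : b k ≤ M b * p k := hpleB b hbB k
      rw [hbi]
      nlinarith [hppos i, hppos k]
  · -- revenue comparison
    apply sSup_le_sSup
    rintro v ⟨x, hx, rfl⟩
    refine ⟨x, fun b hb => (hDsub b hb (x b) (hx b hb)).2, ?_⟩
    have hs : (∑ b ∈ B, ∑ i, p i * x b i) = ∑ b ∈ B, ∑ i, pbar i * x b i :=
      Finset.sum_congr rfl fun b hb => (hDsub b hb (x b) (hx b hb)).1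
    rw [hs]
end
end

section
/- Let p̄, p ∈ ℝ^n_{>0} with p ≥ p̄ coordinate-wise and G^b(p) ⊇ G^b(p̄) for every bid b ∈ 𝓑. Then r(p) ≥ r(p̄). -/
open Finset

noncomputable section

lemma sum_shift {n : ℕ} (g x : Fin n → ℝ) (i : Fin n) (c : ℝ) :
    ∑ m, g m * (x m + if m = i then c else 0)
      = (∑ m, g m * x m) + g i * c := by
  simp [mul_add, Finset.sum_add_distrib, mul_ite, mul_zero, Finset.sum_ite_eq']

lemma factA {n : ℕ} (b pbar : Fin n → ℝ) (β : ℝ)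
    (hpbar : ∀ i, 0 < pbar i)
    (x : Fin n → ℝ) (hx : x ∈ demandSet n b pbar β)
    (i : Fin n) (hxi : 0 < x i) :
    (i.succ : Fin (n + 1)) ∈ demandedGoods n b pbar := by
  obtain ⟨⟨hxnn, hxbud⟩, hxopt⟩ := hx
  intro j
  induction j using Fin.cases with
  | zero =>
    simp only [extOne, Fin.cases_succ, Fin.cases_zero, mul_one, one_mul, ge_iff_le]
    by_contra hlt
    push_neg at hlt
    set z : Fin n → ℝ := fun m => x m + if m = i then -(x i) else 0 with hz
    have hzmem : z ∈ budgetSet n pbar β := by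
      constructor
      · intro m
        rcases eq_or_ne m i with rfl | hm
        · simp [hz]
        · simp [hz, hm, hxnn m]
      · have := sum_shift pbar x i (-(x i))
        simp only [hz]
        rw [this]
        nlinarith [mul_pos (hpbar i) hxi]
    have hle := hxopt z hzmem
    rw [sum_shift (fun m => b m - pbar m) x i (-(x i))] at hle
    nlinarith [mul_pos (sub_pos.mpr hlt) hxi]
  | succ k =>
    simp only [extOne, Fin.cases_succ, ge_iff_le]
    by_contra hlt
    push_neg at hlt
    have hki : k ≠ i := by rintro rfl; exact lt_irrefl _ hlt
    set c : ℝ := pbar i * x i / pbar k with hc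
    have hcpos : 0 < c := div_pos (mul_pos (hpbar i) hxi) (hpbar k)
    have hck : c * pbar k = pbar i * x i := by
      rw [hc, div_mul_cancel₀ _ (hpbar k).ne']
    set z : Fin n → ℝ :=
      fun m => (x m + if m = k then c else 0) + if m = i then -(x i) else 0 with hz
    have hsum : ∀ g : Fin n → ℝ,
        ∑ m, g m * z m = (∑ m, g m * x m) + g k * c + g i * (-(x i)) := by
      intro g
      have h1 := sum_shift g (fun m => x m + if m = k then c else 0) i (-(x i))
      have h2 := sum_shift g x k c
      simp only [hz]
      rw [h1, h2]
    have hzmem : z ∈ budgetSet n pbar β := by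
      constructor
      · intro m
        by_cases hmi : m = i
        · subst hmi; simp [hz, hki.symm]
        · by_cases hmk : m = k
          · subst hmk
            show (0:ℝ) ≤ (x m + if m = m then c else 0) + if m = i then -x i else 0
            rw [if_pos rfl, if_neg hmi]
            linarith [hxnn m, hcpos.le]
          · simp [hz, hmi, hmk, hxnn m]
      · rw [hsum pbar]
        nlinarith [hck]
    have hle := hxopt z hzmem
    rw [hsum (fun m => b m - pbar m)] at hle
    have h1 : (b k - pbar k) * c ≤ (b i - pbar i) * x i := by linarith
    have h2 : (b k - pbar k) * c * pbar k ≤ (b i - pbar i) * x i * pbar k :=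
      mul_le_mul_of_nonneg_right h1 (hpbar k).le
    rw [mul_assoc, hck] at h2
    nlinarith [mul_pos hxi (sub_pos.mpr hlt)]

lemma factB {n : ℕ} (b pbar : Fin n → ℝ) (β : ℝ) (hβ : 0 < β)
    (hpbar : ∀ i, 0 < pbar i)
    (x : Fin n → ℝ) (hx : x ∈ demandSet n b pbar β)
    (i : Fin n) (hbi : pbar i < b i) :
    ∑ m, pbar m * x m = β := by
  obtain ⟨⟨hxnn, hxbud⟩, hxopt⟩ := hx
  refine le_antisymm hxbud ?_
  set ε : ℝ := (β - ∑ m, pbar m * x m) / pbar i with hε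
  have hεnn : 0 ≤ ε := div_nonneg (by linarith) (hpbar i).le
  have hεp : pbar i * ε = β - ∑ m, pbar m * x m := by
    rw [hε, mul_div_cancel₀ _ (hpbar i).ne']
  set z : Fin n → ℝ := fun m => x m + if m = i then ε else 0 with hz
  have hzmem : z ∈ budgetSet n pbar β := by
    constructor
    · intro m
      rcases eq_or_ne m i with rfl | hm
      · simp only [hz, if_pos rfl, if_true]
        linarith [hxnn m]
      · simp [hz, hm, hxnn m]
    · rw [show ∑ m, pbar m * z m = (∑ m, pbar m * x m) + pbar i * ε from
        sum_shift pbar x i ε]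
      linarith
  have hle := hxopt z hzmem
  rw [sum_shift (fun m => b m - pbar m) x i ε] at hle
  have hεle : ε ≤ 0 := by nlinarith
  have : ε = 0 := le_antisymm hεle hεnn
  rw [this] at hεp
  linarith [hεp]

lemma demand_mono {n : ℕ} (b pbar p : Fin n → ℝ) (β : ℝ) (hβ : 0 < β)
    (hpbar : ∀ i, 0 < pbar i) (hp : ∀ i, 0 < p i) (hge : ∀ i, pbar i ≤ p i)
    (hG : ∀ i : Fin (n + 1), i ∈ demandedGoods n b pbar → i ∈ demandedGoods n b p)
    (x : Fin n → ℝ) (hx : x ∈ demandSet n b pbar β) :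
    (fun i => pbar i / p i * x i) ∈ demandSet n b p β := by
  obtain ⟨⟨hxnn, hxbud⟩, hxopt⟩ := hx
  set y : Fin n → ℝ := fun i => pbar i / p i * x i with hy
  have hynn : ∀ i, 0 ≤ y i := fun i =>
    mul_nonneg (div_nonneg (hpbar i).le (hp i).le) (hxnn i)
  have hyterm : ∀ i, p i * y i = pbar i * x i := by
    intro i
    have hpne : p i ≠ 0 := (hp i).ne'
    rw [hy]
    field_simp
  have hysum : ∑ i, p i * y i = ∑ i, pbar i * x i :=
    Finset.sum_congr rfl fun i _ => hyterm i
  refine ⟨⟨hynn, by rw [hysum]; exact hxbud⟩, ?_⟩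
  intro z hz
  obtain ⟨hznn, hzbud⟩ := hz
  by_cases hx0 : ∀ i, x i = 0
  · have hy0 : ∑ i, (b i - p i) * y i = 0 := by
      apply Finset.sum_eq_zero
      intro i _
      simp [hy, hx0 i]
    rw [hy0]
    apply Finset.sum_nonpos
    intro i _
    have hbi : b i ≤ pbar i := by
      set w : Fin n → ℝ := fun m => if m = i then β / pbar i else 0 with hw
      have hwsum : ∀ g : Fin n → ℝ, ∑ m, g m * w m = g i * (β / pbar i) := by
        intro g
        simp [hw, mul_ite, Finset.sum_ite_eq']
      have hwmem : w ∈ budgetSet n pbar β := by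
        refine ⟨fun m => ?_, ?_⟩
        · rw [hw]
          dsimp only
          by_cases hm : m = i
          · rw [if_pos hm]
            exact (div_pos hβ (hpbar i)).le
          · rw [if_neg hm]
        · rw [hwsum pbar, mul_div_cancel₀ _ (hpbar i).ne']
      have hle := hxopt w hwmem
      rw [hwsum (fun m => b m - pbar m)] at hle
      have hx0sum : ∑ m, (b m - pbar m) * x m = 0 := by
        apply Finset.sum_eq_zero
        intro m _
        simp [hx0 m]
      rw [hx0sum] at hle
      have hβp : 0 < β / pbar i := div_pos hβ (hpbar i)
      nlinarith
    exact mul_nonpos_of_nonpos_of_nonneg (by linarith [hge i]) (hznn i)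
  · push_neg at hx0
    obtain ⟨i0, hi0⟩ := hx0
    have hxi0 : 0 < x i0 := lt_of_le_of_ne (hxnn i0) (Ne.symm hi0)
    have hi0G : (i0.succ : Fin (n + 1)) ∈ demandedGoods n b p :=
      hG _ (factA b pbar β hpbar x ⟨⟨hxnn, hxbud⟩, hxopt⟩ i0 hxi0)
    have hmax : ∀ j : Fin n, b j * p i0 ≤ b i0 * p j := by
      intro j
      have := hi0G j.succ
      simpa [extOne] using this
    have hone : p i0 ≤ b i0 := by
      have := hi0G 0
      simpa [extOne] using this
    have hsupp : ∀ j : Fin n, 0 < x j → b j * p i0 = b i0 * p j := by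
      intro j hxj
      refine le_antisymm (hmax j) ?_
      have hjG : (j.succ : Fin (n + 1)) ∈ demandedGoods n b p :=
        hG _ (factA b pbar β hpbar x ⟨⟨hxnn, hxbud⟩, hxopt⟩ j hxj)
      have := hjG i0.succ
      simpa [extOne] using this
    rw [← mul_le_mul_iff_right₀ (hp i0), Finset.mul_sum, Finset.mul_sum]
    have hzle : ∑ m, p i0 * ((b m - p m) * z m) ≤ (b i0 - p i0) * β := by
      calc ∑ m, p i0 * ((b m - p m) * z m)
          ≤ ∑ m, (b i0 - p i0) * (p m * z m) := by
            apply Finset.sum_le_sum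
            intro m _
            nlinarith [hmax m, hznn m, hp m]
        _ = (b i0 - p i0) * ∑ m, p m * z m := by rw [Finset.mul_sum]
        _ ≤ (b i0 - p i0) * β := by
            apply mul_le_mul_of_nonneg_left hzbud
            linarith
    have hyeq : ∑ m, p i0 * ((b m - p m) * y m)
        = (b i0 - p i0) * ∑ m, pbar m * x m := by
      rw [← hysum, Finset.mul_sum]
      apply Finset.sum_congr rfl
      intro m _
      rcases eq_or_lt_of_le (hxnn m) with h0 | hpos
      · have : y m = 0 := by simp [hy, ← h0]
        simp [this]
      · have := hsupp m hpos
        linear_combination y m * this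
    rw [hyeq]
    refine le_trans hzle ?_
    rcases eq_or_lt_of_le hone with heq | hlt
    · rw [← heq]
      simp
    · have hfb : ∑ m, pbar m * x m = β :=
        factB b pbar β hβ hpbar x ⟨⟨hxnn, hxbud⟩, hxopt⟩ i0
          (lt_of_le_of_lt (hge i0) hlt)
      rw [hfb]

/-- If prices increase coordinate-wise while every bidder's demanded-goods set
only grows, the optimal revenue does not decrease. -/
theorem stmt6 (n : ℕ) (hn : 1 ≤ n) (B : Finset (Fin n → ℝ)) (hBne : B.Nonempty)
    (hbnn : ∀ b ∈ B, ∀ i, 0 ≤ b i)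
    (β : (Fin n → ℝ) → ℝ) (hβ : ∀ b ∈ B, 0 < β b)
    (ψ : (Fin n → ℝ) → EReal) (hψ0 : ψ 0 = 0)
    (hψmono : ∀ x y : Fin n → ℝ, (∀ i, 0 ≤ x i) → (∀ i, x i ≤ y i) → ψ x ≤ ψ y)
    (hψconv : ∀ x y : Fin n → ℝ, (∀ i, 0 ≤ x i) → (∀ i, 0 ≤ y i) →
      ∀ t : ℝ, 0 ≤ t → t ≤ 1 →
      ψ (t • x + (1 - t) • y) ≤ (t : EReal) * ψ x + ((1 - t : ℝ) : EReal) * ψ y)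
    (hψlsc : LowerSemicontinuousOn ψ {x | ∀ i, 0 ≤ x i})
    (pbar p : Fin n → ℝ) (hpbar : ∀ i, 0 < pbar i) (hp : ∀ i, 0 < p i)
    (hge : ∀ i, pbar i ≤ p i)
    (hG : ∀ b ∈ B, ∀ i : Fin (n + 1),
      i ∈ demandedGoods n b pbar → i ∈ demandedGoods n b p) :
    revenue n B β ψ pbar ≤ revenue n B β ψ p := by
  refine sSup_le ?_
  rintro v ⟨x, hxmem, rfl⟩
  set y : (Fin n → ℝ) → (Fin n → ℝ) := fun b i => pbar i / p i * x b i with hy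
  have hymem : ∀ b ∈ B, y b ∈ demandSet n b p (β b) := fun b hb =>
    demand_mono b pbar p (β b) (hβ b hb) hpbar hp hge (hG b hb) (x b) (hxmem b hb)
  have hsums : (∑ b ∈ B, ∑ i, p i * y b i) = ∑ b ∈ B, ∑ i, pbar i * x b i := by
    refine Finset.sum_congr rfl fun b _ => Finset.sum_congr rfl fun i _ => ?_
    have hpne : p i ≠ 0 := (hp i).ne'
    rw [hy]
    field_simp
  refine le_sSup_of_le ⟨y, hymem, rfl⟩ ?_
  rw [hsums]
  refine EReal.sub_le_sub le_rfl ?_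
  have hxnn : ∀ b ∈ B, ∀ i, 0 ≤ x b i := fun b hb => (hxmem b hb).1.1
  refine hψmono _ _ ?_ ?_
  · intro i
    rw [Finset.sum_apply]
    exact Finset.sum_nonneg fun b hb =>
      mul_nonneg (div_nonneg (hpbar i).le (hp i).le) (hxnn b hb i)
  · intro i
    rw [Finset.sum_apply, Finset.sum_apply]
    refine Finset.sum_le_sum fun b hb => ?_
    have h1 : pbar i / p i ≤ 1 := (div_le_one (hp i)).mpr (hge i)
    calc pbar i / p i * x b i ≤ 1 * x b i :=
          mul_le_mul_of_nonneg_right h1 (hxnn b hb i)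
      _ = x b i := one_mul _
end
end

section
/- In the filtered_prices algorithm, the pruning step is sound: if generate_candidate returns INFEASIBLE at iteration k for input ((b^1,…,b^n), σ), then for every permutation σ' with σ'(l) = σ(l) for all l ≤ k, generate_candidate on ((b^1,…,b^n), σ') also returns INFEASIBLE at or before iteration k. -/
open Finset

/-- The auxiliary variables `C^l_{k+1}` of the `generate_candidate` algorithm:
`candC n b σ k l` is the value `C^{l+1}_{k+1}` (0-indexed in both arguments).
`C^l_1 = 1`; at step `k` the algorithm sets `p_{σ(k)} = C^k_k b^k_{σ(k)}` and
updates `C^l_{k+1} = min(C^l_k, p_{σ(k)}/b^l_{σ(k)})` for `l > k`. -/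
noncomputable def candC (n : ℕ) (b : Fin n → Fin (n + 1) → ℝ) (σ : Equiv.Perm (Fin n)) :
    ℕ → Fin n → ℝ
  | 0 => fun _ => 1
  | (k + 1) => fun l =>
      if h : k < n ∧ k < (l : ℕ) then
        min (candC n b σ k l)
          ((candC n b σ k ⟨k, h.1⟩ * b ⟨k, h.1⟩ ((σ ⟨k, h.1⟩).succ)) / b l ((σ ⟨k, h.1⟩).succ))
      else candC n b σ k l

/-- The price vector output by `generate_candidate`: `p_{σ(k)} = C^k_k b^k_{σ(k)}`,
with the dummy coordinate `p₀ = 1`. -/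
noncomputable def candP (n : ℕ) (b : Fin n → Fin (n + 1) → ℝ) (σ : Equiv.Perm (Fin n)) :
    Fin (n + 1) → ℝ :=
  Fin.cases 1 (fun i => candC n b σ (σ.symm i) (σ.symm i) * b (σ.symm i) i.succ)

/-- `generate_candidate` returns INFEASIBLE at iteration `k`: there is `m < k`
with `b^m_{σ(m)} p_{σ(k)} < b^m_{σ(k)} p_{σ(m)}`. -/
def infAt (n : ℕ) (b : Fin n → Fin (n + 1) → ℝ) (σ : Equiv.Perm (Fin n)) (k : Fin n) : Prop :=
  ∃ m : Fin n, m < k ∧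
    b m ((σ m).succ) * candP n b σ ((σ k).succ) < b m ((σ k).succ) * candP n b σ ((σ m).succ)

/-- `candC` at step `j` depends on the permutation only through its values at
indices `< j`. -/
lemma candC_congr (n : ℕ) (b : Fin n → Fin (n + 1) → ℝ) (σ σ' : Equiv.Perm (Fin n))
    (j : ℕ) (hj : ∀ i : Fin n, (i : ℕ) < j → σ' i = σ i) :
    ∀ l, candC n b σ' j l = candC n b σ j l := by
  induction j with
  | zero => intro l; rfl
  | succ j ih =>
    intro l
    have ih' := ih (fun i hi => hj i (Nat.lt_succ_of_lt hi))
    simp only [candC]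
    split
    · next h =>
      rw [ih' l, ih' ⟨j, h.1⟩, hj ⟨j, h.1⟩ (Nat.lt_succ_self j)]
    · exact ih' l

/-- Soundness of the pruning step of `filtered_prices`: if `generate_candidate`
returns INFEASIBLE at iteration `k` for `σ`, then for every permutation `σ'`
agreeing with `σ` on all `l ≤ k`, it also returns INFEASIBLE at or before
iteration `k`. -/
theorem stmt11 (n : ℕ) (b : Fin n → Fin (n + 1) → ℝ) (hbpos : ∀ l i, 0 < b l i)
    (hb0 : ∀ l, b l 0 = 1) (σ : Equiv.Perm (Fin n)) (k : Fin n)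
    (hfirst : ∀ k' : Fin n, k' < k → ¬ infAt n b σ k')
    (hk : infAt n b σ k)
    (σ' : Equiv.Perm (Fin n)) (hagree : ∀ l : Fin n, l ≤ k → σ' l = σ l) :
    ∃ k' : Fin n, k' ≤ k ∧ infAt n b σ' k' := by
  obtain ⟨m, hm, hlt⟩ := hk
  refine ⟨k, le_refl k, m, hm, ?_⟩
  have hσk : σ' k = σ k := hagree k (le_refl k)
  have hσm : σ' m = σ m := hagree m (le_of_lt hm)
  have hCk : ∀ l, candC n b σ' (k : ℕ) l = candC n b σ (k : ℕ) l :=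
    candC_congr n b σ σ' (k : ℕ) (fun i hi => hagree i (le_of_lt hi))
  have hCm : ∀ l, candC n b σ' (m : ℕ) l = candC n b σ (m : ℕ) l :=
    candC_congr n b σ σ' (m : ℕ) (fun i hi => hagree i (le_of_lt (lt_of_lt_of_le hi hm.le)))
  have hsymk : σ'.symm (σ k) = k := by rw [← hσk]; exact σ'.symm_apply_apply k
  have hsymm : σ'.symm (σ m) = m := by rw [← hσm]; exact σ'.symm_apply_apply m
  have hPk : candP n b σ' ((σ' k).succ) = candP n b σ ((σ k).succ) := by
    simp only [candP, hσk, Fin.cases_succ, hsymk, Equiv.symm_apply_apply, hCk]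
  have hPm : candP n b σ' ((σ' m).succ) = candP n b σ ((σ m).succ) := by
    simp only [candP, hσm, Fin.cases_succ, hsymm, Equiv.symm_apply_apply, hCm]
  rw [hσk, hσm, hPk, hPm] at *
  exact hlt
end

section
/- Suppose for every bid b ∈ 𝓑 the demanded-goods set at p contains the demanded-goods set at p̄ (G^b(p) ⊇ G^b(p̄)), with p, p̄ ∈ ℝ^n_{>0} and p ≥ p̄ coordinate-wise. If x̄^b ∈ D^b(p̄) is written as a convex combination x̄^b = Σ_{i ∈ G^b(p̄)} λ_i (β(b)/p̄_i) e_i, then x^b := Σ_{i ∈ G^b(p̄)} λ_i (β(b)/p_i) e_i satisfies: x^b ∈ D^b(p), ⟨p, x^b⟩ = ⟨p̄, x̄^b⟩, and x^b ≤ x̄^b coordinate-wise. -/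
open Finset

lemma coordAux (n : ℕ) (p : Fin n → ℝ) (lam : Fin (n+1) → ℝ) (β : ℝ) (j : Fin n) :
    (∑ i, lam i • ((β / extOne n p i) • unitBundle n i)) j
      = lam j.succ * (β / p j) := by
  rw [Finset.sum_apply, Fin.sum_univ_succ]
  simp [unitBundle, extOne, Pi.single_apply, mul_ite, Finset.sum_ite_eq', eq_comm]

lemma costAux (n : ℕ) (p : Fin n → ℝ) (hp : ∀ i, 0 < p i) (lam : Fin (n+1) → ℝ)
    (β : ℝ) (x : Fin n → ℝ)
    (hx : x = ∑ i, lam i • ((β / extOne n p i) • unitBundle n i)) :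
    ∑ j, p j * x j = β * ∑ j : Fin n, lam j.succ := by
  rw [Finset.mul_sum]
  refine Finset.sum_congr rfl fun j _ => ?_
  rw [hx, coordAux]
  have := (hp j).ne'
  field_simp

/-- Rescaling an optimal bundle at `p̄` to the higher prices `p`: if
`x̄ = Σ_{i ∈ G(p̄)} λ_i (β/p̄_i) e_i ∈ D(p̄)` then
`x = Σ_{i ∈ G(p̄)} λ_i (β/p_i) e_i` lies in `D(p)`, costs the same, and is
coordinate-wise smaller. -/
theorem stmt15 (n : ℕ) (hn : 1 ≤ n) (b : Fin n → ℝ) (hbnn : ∀ i, 0 ≤ b i)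
    (β : ℝ) (hβ : 0 < β)
    (pbar p : Fin n → ℝ) (hpbar : ∀ i, 0 < pbar i) (hp : ∀ i, 0 < p i)
    (hge : ∀ i, pbar i ≤ p i)
    (hG : ∀ i : Fin (n + 1),
      i ∈ demandedGoods n b pbar → i ∈ demandedGoods n b p)
    (lam : Fin (n + 1) → ℝ) (hlnn : ∀ i, 0 ≤ lam i) (hlsum : ∑ i, lam i = 1)
    (hsupp : ∀ i, i ∉ demandedGoods n b pbar → lam i = 0)
    (xbar x : Fin n → ℝ)
    (hxbarD : xbar ∈ demandSet n b pbar β)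
    (hxbar : xbar = ∑ i, lam i • ((β / extOne n pbar i) • unitBundle n i))
    (hx : x = ∑ i, lam i • ((β / extOne n p i) • unitBundle n i)) :
    x ∈ demandSet n b p β ∧ (∑ j, p j * x j = ∑ j, pbar j * xbar j) ∧
      ∀ j, x j ≤ xbar j := by
  -- extended positivity
  have hpext : ∀ i : Fin (n+1), 0 < extOne n p i := by
    intro i
    induction i using Fin.cases with
    | zero => simp [extOne]
    | succ k => simpa [extOne] using hp k
  -- there is an index with positive weight
  have hex : ∃ i0, lam i0 ≠ 0 := by
    by_contra h
    push_neg at h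
    simp [h] at hlsum
  obtain ⟨i0, hi0⟩ := hex
  have hi0G : i0 ∈ demandedGoods n b p := by
    refine hG i0 ?_
    by_contra h
    exact hi0 (hsupp i0 h)
  set M : ℝ := extOne n b i0 / extOne n p i0 with hM
  have hi0p := hpext i0
  -- M ≥ 1
  have hM1 : 1 ≤ M := by
    have h0 := hi0G 0
    simp only [extOne, Fin.cases_zero] at h0
    rw [hM, le_div_iff₀ hi0p]
    simpa [extOne, mul_comm] using h0
  -- upper bound: extOne b j ≤ M * extOne p j
  have hub : ∀ j : Fin (n+1), extOne n b j ≤ M * extOne n p j := by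
    intro j
    have h := hi0G j
    rw [hM, div_mul_eq_mul_div, le_div_iff₀ hi0p]
    linarith [h]
  -- equality where lam j ≠ 0
  have heq : ∀ j : Fin (n+1), lam j ≠ 0 → extOne n b j = M * extOne n p j := by
    intro j hj
    have hjG : j ∈ demandedGoods n b p := by
      refine hG j ?_
      by_contra h
      exact hj (hsupp j h)
    have h1 := hub j
    have h2 := hjG i0
    have : M * extOne n p j ≤ extOne n b j := by
      rw [hM, div_mul_eq_mul_div, div_le_iff₀ hi0p]
      linarith [h2]
    linarith
  -- coordinates of x and xbar
  have hxc : ∀ j : Fin n, x j = lam j.succ * (β / p j) := fun j => by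
    rw [hx, coordAux]
  have hxbarc : ∀ j : Fin n, xbar j = lam j.succ * (β / pbar j) := fun j => by
    rw [hxbar, coordAux]
  -- nonneg
  have hxnn : ∀ j, 0 ≤ x j := by
    intro j
    rw [hxc j]
    exact mul_nonneg (hlnn _) (div_nonneg hβ.le (hp j).le)
  -- sum of succ lambdas
  have hssum : ∑ j : Fin n, lam j.succ = 1 - lam 0 := by
    have := hlsum
    rw [Fin.sum_univ_succ] at this
    linarith
  have hl0 : lam 0 ≤ 1 := by
    have : 0 ≤ ∑ j : Fin n, lam j.succ :=
      Finset.sum_nonneg fun j _ => hlnn _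
    linarith [hssum]
  -- cost of x
  have hcx : ∑ j, p j * x j = β * (1 - lam 0) := by
    rw [costAux n p hp lam β x hx, hssum]
  have hcxbar : ∑ j, pbar j * xbar j = β * (1 - lam 0) := by
    rw [costAux n pbar hpbar lam β xbar hxbar, hssum]
  have hbudget : x ∈ budgetSet n p β := by
    refine ⟨hxnn, ?_⟩
    rw [hcx]
    nlinarith [hlnn 0]
  -- (M-1) * lam 0 = 0
  have hMl0 : (M - 1) * lam 0 = 0 := by
    rcases eq_or_ne (lam 0) 0 with h | h
    · simp [h]
    · have := heq 0 h
      simp only [extOne, Fin.cases_zero] at this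
      rw [show M = 1 by linarith]
      ring
  -- value of x
  have hvx : ∑ j, (b j - p j) * x j = β * (M - 1) := by
    have hterm : ∀ j : Fin n, (b j - p j) * x j = β * (M - 1) * lam j.succ := by
      intro j
      rcases eq_or_ne (lam j.succ) 0 with h | h
      · rw [hxc j, h]; ring
      · have hbj := heq j.succ h
        simp only [extOne, Fin.cases_succ] at hbj
        rw [hxc j, hbj]
        have := (hp j).ne'
        field_simp
    rw [Finset.sum_congr rfl fun j _ => hterm j, ← Finset.mul_sum, hssum]
    nlinarith [hMl0]
  refine ⟨⟨hbudget, ?_⟩, ?_, ?_⟩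
  · intro y hy
    rw [hvx]
    have hle : ∀ j : Fin n, (b j - p j) * y j ≤ (M - 1) * (p j * y j) := by
      intro j
      have h1 := hub j.succ
      simp only [extOne, Fin.cases_succ] at h1
      nlinarith [hy.1 j]
    calc ∑ j, (b j - p j) * y j ≤ ∑ j, (M - 1) * (p j * y j) :=
          Finset.sum_le_sum fun j _ => hle j
      _ = (M - 1) * ∑ j, p j * y j := by rw [Finset.mul_sum]
      _ ≤ (M - 1) * β := by
          apply mul_le_mul_of_nonneg_left hy.2
          linarith
      _ = β * (M - 1) := by ring
  · rw [hcx, hcxbar]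
  · intro j
    rw [hxc j, hxbarc j]
    have h1 : β / p j ≤ β / pbar j :=
      div_le_div_of_nonneg_left hβ.le (hpbar j) (hge j)
    exact mul_le_mul_of_nonneg_left h1 (hlnn _)
end

section
/- For a bid b with budget β and positive prices p (with b₀ = p₀ = 1, e₀ = 0), the demand set has the dual description D^b(p) = { x ∈ ℝ^n_{≥0} : ⟨p, x⟩ ≤ β and ⟨b − p, x⟩ ≥ (β/p_i)(b_i − p_i) for all i = 0,…,n }; i.e., a feasible bundle is demanded iff its utility is at least the utility of spending the full budget on any single good (or buying nothing). -/
open Finset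

/-- Dual description of the demand set: a feasible bundle is demanded iff its
utility is at least the utility `(β/p_i)(b_i − p_i)` of spending the full
budget on any single good `i` (including the dummy good `0`). -/
theorem stmt17 (n : ℕ) (hn : 1 ≤ n) (b : Fin n → ℝ) (hbnn : ∀ i, 0 ≤ b i)
    (p : Fin n → ℝ) (hp : ∀ i, 0 < p i) (β : ℝ) (hβ : 0 < β) :
    demandSet n b p β =
      {x : Fin n → ℝ | (∀ i, 0 ≤ x i) ∧ ∑ i, p i * x i ≤ β ∧
        ∀ i : Fin (n + 1),
          (β / extOne n p i) * (extOne n b i - extOne n p i) ≤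
            ∑ j, (b j - p j) * x j} := by
  ext x
  simp only [demandSet, budgetSet, Set.mem_setOf_eq]
  constructor
  · rintro ⟨⟨hx0, hxb⟩, hmax⟩
    refine ⟨hx0, hxb, ?_⟩
    intro i
    induction i using Fin.cases with
    | zero =>
      have h0 := hmax 0 ⟨fun i => le_refl 0, by simp [hβ.le]⟩
      simpa [extOne] using h0
    | succ j =>
      have hyb : ∑ i, p i * (Pi.single j (β / p j) : Fin n → ℝ) i = β := by
        rw [Finset.sum_eq_single j]
        · rw [Pi.single_eq_same]; exact mul_div_cancel₀ β (hp j).ne'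
        · intro k _ hk; rw [Pi.single_eq_of_ne hk, mul_zero]
        · simp
      have hy0 : ∀ i, (0:ℝ) ≤ (Pi.single j (β / p j) : Fin n → ℝ) i := by
        intro i
        rcases eq_or_ne i j with rfl | h
        · rw [Pi.single_eq_same]; have := hp i; positivity
        · rw [Pi.single_eq_of_ne h]
      have h1 := hmax _ ⟨hy0, le_of_eq hyb⟩
      have h2 : ∑ i, (b i - p i) * (Pi.single j (β / p j) : Fin n → ℝ) i
          = β / p j * (b j - p j) := by
        rw [Finset.sum_eq_single j]
        · rw [Pi.single_eq_same]; ring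
        · intro k _ hk; rw [Pi.single_eq_of_ne hk, mul_zero]
        · simp
      rw [h2] at h1
      simpa [extOne] using h1
  · rintro ⟨hx0, hxb, hcorner⟩
    refine ⟨⟨hx0, hxb⟩, ?_⟩
    rintro y ⟨hy0, hyb⟩
    set M := ∑ j, (b j - p j) * x j with hM
    have hM0 : 0 ≤ M := by simpa [extOne] using hcorner 0
    have key : ∀ i, b i - p i ≤ M / β * p i := by
      intro i
      have h := hcorner i.succ
      simp only [extOne, Fin.cases_succ] at h
      have hpi := hp i
      rw [div_mul_eq_mul_div, div_le_iff₀ hpi] at h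
      rw [div_mul_eq_mul_div, le_div_iff₀ hβ]
      linarith
    calc ∑ i, (b i - p i) * y i ≤ ∑ i, M / β * p i * y i := by
          apply Finset.sum_le_sum
          intro i _
          exact mul_le_mul_of_nonneg_right (key i) (hy0 i)
      _ = M / β * ∑ i, p i * y i := by rw [Finset.mul_sum]; simp [mul_assoc]
      _ ≤ M / β * β := mul_le_mul_of_nonneg_left hyb (by positivity)
      _ = M := by field_simp
end
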